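/- Suppose 3 ≤ e_j ≤ N for all j, and suppose a_j < α + x < a_{j-1} for some j. Then for any η with 0 < η < (4N)^{-2}, one has α + xη < a_j; i.e., α + x and α + xη lie in distinct intervals of the partition {(a_j, a_{j-1})}. -/

import Mathlib

/-!
Write `p_k = m_{k+1} - m_k`. The determinant identity `n_{k+1} m_k - n_k m_{k+1} = 1` gives
`a_k - n_k/m_k = 1/(m_k p_k)` and `a_k - n_{k+1}/m_{k+1} = 1/(p_k m_{k+1})`. Since `m` grows at
least geometrically, `n_k/m_k` increases, `a_k` decreases and `n_k/m_k ≤ a_k`, so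
`n_j/m_j ≤ α ≤ a_{j+1}`. Hence `x < a_{j-1} - n_j/m_j ≤ 2/m_j²`, while `e_{j+1} ≥ 3` gives
`a_j - α ≥ a_j - a_{j+1} ≥ 1/(3 m_{j+1}²)`. With `m_{j+1} ≤ N m_j` this yields
`x η < 1/(8 N² m_j²) ≤ 1/(8 m_{j+1}²) < a_j - α`.
-/

open Filter Topology

lemma slope_sub_div_left_of_det {m m' n n' : ℝ} (h : n' * m - n * m' = 1) (hm : m ≠ 0)
    (hp : m' - m ≠ 0) : (n' - n) / (m' - m) - n / m = 1 / (m * (m' - m)) := by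
  field_simp
  linear_combination h

lemma slope_sub_div_right_of_det {m m' n n' : ℝ} (h : n' * m - n * m' = 1) (hm' : m' ≠ 0)
    (hp : m' - m ≠ 0) : (n' - n) / (m' - m) - n' / m' = 1 / ((m' - m) * m') := by
  field_simp
  linear_combination h

lemma det_eq_one_of_recurrence {e m n : ℕ → ℤ}
    (hm0 : m 0 = 0) (hn0 : n 0 = -1) (hm1 : m 1 = 1) (hn1 : n 1 = 0)
    (hm : ∀ j, 1 ≤ j → m (j + 1) = e j * m j - m (j - 1))
    (hn : ∀ j, 1 ≤ j → n (j + 1) = e j * n j - n (j - 1)) (k : ℕ) :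
    n (k + 1) * m k - n k * m (k + 1) = 1 := by
  induction k with
  | zero => simp [hm0, hn0, hm1, hn1]
  | succ k ih =>
    rw [hm (k + 1) k.succ_pos, hn (k + 1) k.succ_pos, Nat.add_sub_cancel]
    linear_combination ih

section Recurrence

variable {e m : ℕ → ℤ} (he : ∀ j, 1 ≤ j → 3 ≤ e j)
  (hm : ∀ j, 1 ≤ j → m (j + 1) = e j * m j - m (j - 1))
include he hm

lemma three_mul_sub_le_of_recurrence {k : ℕ} (hk : 0 ≤ m (k + 1)) :
    3 * m (k + 1) - m k ≤ m (k + 2) := by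
  have := hm (k + 1) k.succ_pos
  rw [Nat.add_sub_cancel] at this
  nlinarith [he (k + 1) k.succ_pos]

variable (hm0 : m 0 = 0) (hm1 : m 1 = 1)
include hm0 hm1

lemma nonneg_and_two_mul_lt_of_recurrence (k : ℕ) : 0 ≤ m k ∧ 2 * m k < m (k + 1) := by
  induction k with
  | zero => simp [hm0, hm1]
  | succ k ih =>
    have := three_mul_sub_le_of_recurrence he hm (k := k) (by omega)
    show 0 ≤ m (k + 1) ∧ 2 * m (k + 1) < m (k + 2)
    omega

lemma five_mul_le_of_recurrence (k : ℕ) : 5 * m (k + 1) ≤ 2 * m (k + 2) := by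
  have := nonneg_and_two_mul_lt_of_recurrence he hm hm0 hm1 k
  have := three_mul_sub_le_of_recurrence he hm (k := k) (by omega)
  omega

lemma le_mul_of_recurrence {N : ℤ} (heN : ∀ j, 1 ≤ j → e j ≤ N) (k : ℕ) :
    m (k + 2) ≤ N * m (k + 1) := by
  have hk := nonneg_and_two_mul_lt_of_recurrence he hm hm0 hm1 k
  have := hm (k + 1) k.succ_pos
  rw [Nat.add_sub_cancel] at this
  nlinarith [heN (k + 1) k.succ_pos]

end Recurrence

/-- The paper's `a_k`. -/
noncomputable def secantSlope (m n : ℕ → ℤ) (k : ℕ) : ℝ :=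
  ((n (k + 1) : ℝ) - n k) / ((m (k + 1) : ℝ) - m k)

section Slope

variable {m n : ℕ → ℤ} (hdet : ∀ k, n (k + 1) * m k - n k * m (k + 1) = 1)
  (hgrow : ∀ k, 0 ≤ m k ∧ 2 * m k < m (k + 1))
include hdet hgrow

omit hdet in
lemma cast_succ_pos_of_two_mul_lt (k : ℕ) : (0 : ℝ) < m (k + 1) := by
  have := hgrow k
  exact_mod_cast (show 0 < m (k + 1) by omega)

omit hdet in
lemma cast_sub_pos_of_two_mul_lt (k : ℕ) : (0 : ℝ) < m (k + 1) - m k := by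
  have := hgrow k
  rw [sub_pos]
  exact_mod_cast (show m k < m (k + 1) by omega)

lemma secantSlope_sub_div_succ (k : ℕ) :
    secantSlope m n k - n (k + 1) / m (k + 1) = 1 / ((m (k + 1) - m k) * m (k + 1)) :=
  slope_sub_div_right_of_det
    (by exact_mod_cast hdet k : (n (k + 1) : ℝ) * m k - n k * m (k + 1) = 1)
    (cast_succ_pos_of_two_mul_lt hgrow k).ne' (cast_sub_pos_of_two_mul_lt hgrow k).ne'

lemma secantSlope_succ_sub_div (k : ℕ) :
    secantSlope m n (k + 1) - n (k + 1) / m (k + 1) = 1 / (m (k + 1) * (m (k + 2) - m (k + 1))) :=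
  slope_sub_div_left_of_det
    (by exact_mod_cast hdet (k + 1) : (n (k + 2) : ℝ) * m (k + 1) - n (k + 1) * m (k + 2) = 1)
    (cast_succ_pos_of_two_mul_lt hgrow k).ne' (cast_sub_pos_of_two_mul_lt hgrow (k + 1)).ne'

lemma div_le_secantSlope_succ (k : ℕ) :
    (n (k + 1) / m (k + 1) : ℝ) ≤ secantSlope m n (k + 1) := by
  have := secantSlope_succ_sub_div hdet hgrow k
  have := cast_succ_pos_of_two_mul_lt hgrow k
  have := cast_sub_pos_of_two_mul_lt hgrow (k + 1)
  have : (0 : ℝ) < 1 / (m (k + 1) * (m (k + 2) - m (k + 1))) := by positivity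
  linarith

lemma antitone_secantSlope : Antitone (secantSlope m n) := by
  refine antitone_nat_of_succ_le fun k => ?_
  have hM := cast_succ_pos_of_two_mul_lt hgrow k
  have hp := cast_sub_pos_of_two_mul_lt hgrow k
  have hp_le : (m (k + 1) - m k : ℝ) ≤ m (k + 2) - m (k + 1) := by
    have := hgrow k; have : 2 * m (k + 1) < m (k + 2) := (hgrow (k + 1)).2
    exact_mod_cast (show m (k + 1) - m k ≤ m (k + 2) - m (k + 1) by omega)
  have : 1 / (m (k + 1) * (m (k + 2) - m (k + 1)) : ℝ) ≤
      1 / ((m (k + 1) - m k) * m (k + 1)) := by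
    rw [mul_comm]; gcongr
  linarith [secantSlope_sub_div_succ hdet hgrow k, secantSlope_succ_sub_div hdet hgrow k]

lemma monotone_div_succ : Monotone fun k => (n (k + 1) / m (k + 1) : ℝ) := by
  refine monotone_nat_of_le_succ fun k => ?_
  have hM := cast_succ_pos_of_two_mul_lt hgrow k
  have hp := cast_sub_pos_of_two_mul_lt hgrow (k + 1)
  have hM_le : (m (k + 1) : ℝ) ≤ m (k + 2) := by
    have := hgrow k; have : 2 * m (k + 1) < m (k + 2) := (hgrow (k + 1)).2
    exact_mod_cast (show m (k + 1) ≤ m (k + 2) by omega)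
  have : 1 / ((m (k + 2) - m (k + 1)) * m (k + 2) : ℝ) ≤
      1 / (m (k + 1) * (m (k + 2) - m (k + 1))) := by
    rw [mul_comm]; gcongr
  linarith [secantSlope_sub_div_succ hdet hgrow (k + 1), secantSlope_succ_sub_div hdet hgrow k]

lemma one_div_three_mul_sq_le_secantSlope_sub (h5 : ∀ k, 5 * m (k + 1) ≤ 2 * m (k + 2))
    (k : ℕ) :
    1 / (3 * m (k + 1) ^ 2 : ℝ) ≤ secantSlope m n k - secantSlope m n (k + 1) := by
  set M : ℝ := (m (k + 1) : ℝ)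
  have hM : 0 < M := cast_succ_pos_of_two_mul_lt hgrow k
  have hp := cast_sub_pos_of_two_mul_lt hgrow k
  have hp_le : (m (k + 1) - m k : ℝ) ≤ M := by
    simp only [M, sub_le_self_iff]; exact_mod_cast (hgrow k).1
  have hp_ge : 3 * M ≤ 2 * (m (k + 2) - m (k + 1) : ℝ) := by
    have := h5 k
    simp only [M]; exact_mod_cast (show 3 * m (k + 1) ≤ 2 * (m (k + 2) - m (k + 1)) by omega)
  have h1 : 1 / M ^ 2 ≤ 1 / ((m (k + 1) - m k) * M) := by
    rw [sq]; gcongr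
  have h2 : 1 / (M * (m (k + 2) - m (k + 1))) ≤ 2 / (3 * M ^ 2) := by
    rw [div_le_div_iff₀ (by nlinarith) (by positivity)]
    nlinarith
  have h3 : 1 / M ^ 2 - 2 / (3 * M ^ 2) = 1 / (3 * M ^ 2) := by
    field_simp; ring
  linarith [secantSlope_sub_div_succ hdet hgrow k, secantSlope_succ_sub_div hdet hgrow k]

variable {α : ℝ} (hα : Tendsto (fun k => (n k / m k : ℝ)) atTop (𝓝 α))
include hα

lemma div_succ_le_of_tendsto (k : ℕ) : (n (k + 1) / m (k + 1) : ℝ) ≤ α :=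
  (monotone_div_succ hdet hgrow).ge_of_tendsto (hα.comp (tendsto_add_atTop_nat 1)) k

lemma le_secantSlope_of_tendsto (k : ℕ) : α ≤ secantSlope m n k := by
  refine le_of_tendsto hα ?_
  filter_upwards [eventually_ge_atTop (k + 1)] with K hK
  obtain ⟨K, rfl⟩ : ∃ K', K = K' + 1 := ⟨K - 1, by omega⟩
  exact (div_le_secantSlope_succ hdet hgrow K).trans (antitone_secantSlope hdet hgrow (by omega))

lemma secantSlope_sub_le_of_tendsto (k : ℕ) : secantSlope m n k - α ≤ 2 / m (k + 1) ^ 2 := by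
  set M : ℝ := (m (k + 1) : ℝ)
  have hM : 0 < M := cast_succ_pos_of_two_mul_lt hgrow k
  have hp := cast_sub_pos_of_two_mul_lt hgrow k
  have hp_ge : M ≤ 2 * (m (k + 1) - m k : ℝ) := by
    have := hgrow k
    simp only [M]; exact_mod_cast (show m (k + 1) ≤ 2 * (m (k + 1) - m k) by omega)
  have : 1 / ((m (k + 1) - m k) * M) ≤ 2 / M ^ 2 := by
    rw [div_le_div_iff₀ (by positivity) (by positivity)]
    nlinarith
  linarith [secantSlope_sub_div_succ hdet hgrow k, div_succ_le_of_tendsto hdet hgrow hα k]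

end Slope

theorem stmt19 (e m n : ℕ → ℤ) (N : ℤ) (a : ℕ → ℝ) (α : ℝ)
    (he : ∀ j, 1 ≤ j → 3 ≤ e j ∧ e j ≤ N)
    (hm0 : m 0 = 0) (hn0 : n 0 = -1) (hm1 : m 1 = 1) (hn1 : n 1 = 0)
    (hm : ∀ j, 1 ≤ j → m (j + 1) = e j * m j - m (j - 1))
    (hn : ∀ j, 1 ≤ j → n (j + 1) = e j * n j - n (j - 1))
    (ha : ∀ j, a j = ((n (j + 1) : ℝ) - (n j : ℝ)) / ((m (j + 1) : ℝ) - (m j : ℝ)))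
    (hα : Tendsto (fun j => (n j : ℝ) / (m j : ℝ)) atTop (nhds α)) :
    ∀ j, 1 ≤ j → ∀ x : ℝ, 0 < x → a j < α + x → α + x < a (j - 1) →
      ∀ t : ℝ, 0 < t → t < (4 * (N : ℝ))⁻¹ ^ 2 → α + x * t < a j := by
  intro j hj x hx _ hxa t ht htN
  obtain ⟨i, rfl⟩ : ∃ i, j = i + 1 := ⟨j - 1, by omega⟩
  obtain rfl : a = secantSlope m n := funext ha
  rw [Nat.add_sub_cancel] at hxa
  have he3 j hj : 3 ≤ e j := (he j hj).1
  have hgrow := nonneg_and_two_mul_lt_of_recurrence he3 hm hm0 hm1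
  have hdet := det_eq_one_of_recurrence hm0 hn0 hm1 hn1 hm hn
  have hx_lt : x < 2 / m (i + 1) ^ 2 := by
    linarith [secantSlope_sub_le_of_tendsto hdet hgrow hα i]
  have hgap : 1 / (3 * m (i + 2) ^ 2) ≤ secantSlope m n (i + 1) - α := by
    linarith [one_div_three_mul_sq_le_secantSlope_sub hdet hgrow
      (five_mul_le_of_recurrence he3 hm hm0 hm1) (i + 1),
      le_secantSlope_of_tendsto hdet hgrow hα (i + 2)]
  have hN : (0 : ℝ) < N := by exact_mod_cast (show 0 < N by linarith [he 1 le_rfl])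
  have hM₁ := cast_succ_pos_of_two_mul_lt hgrow i
  have hM₂ : (0 : ℝ) < m (i + 2) := cast_succ_pos_of_two_mul_lt hgrow (i + 1)
  have hM₂_le : (m (i + 2) : ℝ) ≤ N * m (i + 1) := by
    exact_mod_cast le_mul_of_recurrence he3 hm hm0 hm1 (fun j hj => (he j hj).2) i
  calc α + x * t < α + 2 / m (i + 1) ^ 2 * (4 * (N : ℝ))⁻¹ ^ 2 := by gcongr
    _ = α + 1 / (8 * ((N : ℝ) * m (i + 1)) ^ 2) := by field_simp; ring
    _ ≤ α + 1 / (8 * m (i + 2) ^ 2) := by gcongr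
    _ < α + 1 / (3 * m (i + 2) ^ 2) := by gcongr; norm_num
    _ ≤ secantSlope m n (i + 1) := by linarith
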